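/- arXiv:1605.03455 — 4 statements merged into one kernel-verified Lean document; each statement's English description precedes it below -/
import Mathlib

section
/- Let p > 1 and a,b ∈ ℝ with (a,b) ≠ (0,0). Then ∫₀¹ |a + bt|^{p−2} dt ≤ c_p (|a| + |b|)^{p−2}, where c_p := 1 if p ≥ 2 and c_p := 4^{2−p}/(p−1) if 1 < p < 2. -/
open MeasureTheory Filter Set Metric Topology
open scoped ENNReal NNReal

noncomputable section

/-- Euclidean space ℝⁿ. -/
abbrev En (n : ℕ) : Type := EuclideanSpace ℝ (Fin n)

namespace FracP

variable (n : ℕ)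

/-- `gp p t = |t|^{p-2} t`. -/
def gp (p t : ℝ) : ℝ := |t| ^ (p - 2) * t

/-- The kernel class `Ker(Λ)`: symmetry, translation invariance, growth
`Λ⁻¹ ≤ K(x,y)|x-y|^{n+sp} ≤ Λ` off the diagonal, and continuity in `x` off the diagonal. -/
def IsKernel (s p Λ : ℝ) (K : En n → En n → ℝ) : Prop :=
  (∀ x y, K x y = K y x) ∧
  (∀ x y z : En n, x ≠ y → K (x + z) (y + z) = K x y) ∧
  (∀ x y : En n, x ≠ y →
    Λ⁻¹ ≤ K x y * dist x y ^ ((n : ℝ) + s * p) ∧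
      K x y * dist x y ^ ((n : ℝ) + s * p) ≤ Λ) ∧
  (∀ y : En n, ContinuousOn (fun x => K x y) {y}ᶜ)

/-- The weight `(1+|x|)^{-n-sp}` as an extended nonnegative real. -/
def tailWeight (s p : ℝ) (x : En n) : ℝ≥0∞ :=
  ENNReal.ofReal ((1 + ‖x‖) ^ (-(n : ℝ) - s * p))

/-- `f ∈ L^{p-1}_{sp}(ℝⁿ)`, the tail space. -/
def MemTail (s p : ℝ) (f : En n → ℝ) : Prop :=
  AEMeasurable f volume ∧
  ∫⁻ x : En n, ENNReal.ofReal (|f x| ^ (p - 1)) * tailWeight n s p x < ⊤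

/-- The negative part of an `EReal`-valued function, as an `ℝ≥0∞`-valued function. -/
def negE (u : En n → EReal) (x : En n) : ℝ≥0∞ :=
  if u x = ⊥ then ⊤ else ENNReal.ofReal ((-(u x)).toReal)

/-- `u₋ ∈ L^{p-1}_{sp}(ℝⁿ)` for an `EReal`-valued `u`. -/
def MemTailE (s p : ℝ) (u : En n → EReal) : Prop :=
  ∫⁻ x : En n, (negE n u x) ^ (p - 1) * tailWeight n s p x < ⊤

/-- The truncated integrals whose limit as `ε → 0⁺` is the principal value `L f (x)`. -/
def pvApprox (p : ℝ) (K : En n → En n → ℝ) (f : En n → ℝ) (x : En n) (ε : ℝ) : ℝ :=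
  ∫ y in {y : En n | ε ≤ dist x y}, gp p (f x - f y) * K x y

/-- The principal value `L f (x)` exists and equals `l ∈ [-∞,∞]`. -/
def HasPV (p : ℝ) (K : En n → En n → ℝ) (f : En n → ℝ) (x : En n) (l : EReal) : Prop :=
  Tendsto (fun ε : ℝ => (pvApprox n p K f x ε : EReal)) (𝓝[>] (0 : ℝ)) (𝓝 l)

/-- The principal value `L f (x)` exists, is finite, and equals `I : ℝ`. -/
def HasPVReal (p : ℝ) (K : En n → En n → ℝ) (f : En n → ℝ) (x : En n) (I : ℝ) : Prop :=
  Tendsto (fun ε : ℝ => pvApprox n p K f x ε) (𝓝[>] (0 : ℝ)) (𝓝 I)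

/-- Truncated integrals over `B_ε(x) \ B_δ(x)` (for principal values over a ball). -/
def pvBallApprox (p : ℝ) (K : En n → En n → ℝ) (f : En n → ℝ) (x : En n) (ε δ : ℝ) : ℝ :=
  ∫ y in ball x ε \ ball x δ, gp p (f x - f y) * K x y

/-- Distance to the critical set of `φ` in `D`: `d_φ(x) = dist(x, N_φ)`. -/
def dCrit (φ : En n → ℝ) (D : Set (En n)) (x : En n) : ℝ :=
  Metric.infDist x {y ∈ D | fderiv ℝ φ y = 0}

/-- The class `C²_β(D)`. -/
def MemC2Beta (β : ℝ) (D : Set (En n)) (φ : En n → ℝ) : Prop :=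
  ContDiffOn ℝ 2 φ D ∧
  ∃ C : ℝ, ∀ x ∈ D,
    (min (dCrit n φ D x) 1) ^ (β - 1) / ‖fderiv ℝ φ x‖ +
      ‖fderiv ℝ (fderiv ℝ φ) x‖ / (dCrit n φ D x) ^ (β - 2) ≤ C

/-- `x₀` is an isolated critical point of `φ`. -/
def IsolatedCritPt (φ : En n → ℝ) (x₀ : En n) : Prop :=
  fderiv ℝ φ x₀ = 0 ∧ ∃ ρ > 0, ∀ y ∈ ball x₀ ρ, y ≠ x₀ → fderiv ℝ φ y ≠ 0

/-- Conditions (a)/(b) on a test function `φ` in the definition of viscosity supersolutions. -/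
def TestAdmissible (s p : ℝ) (φ : En n → ℝ) (x₀ : En n) (r : ℝ) : Prop :=
  (2 / (2 - s) < p ∨ fderiv ℝ φ x₀ ≠ 0) ∨
  (p ≤ 2 / (2 - s) ∧ IsolatedCritPt n φ x₀ ∧
    ∃ β : ℝ, s * p / (p - 1) < β ∧ MemC2Beta n β (ball x₀ r) φ)

-- The glued test function `φ_r`: `φ` in `B_r(x₀)` and `u` outside.
open Classical in
def glue (u : En n → EReal) (φ : En n → ℝ) (x₀ : En n) (r : ℝ) : En n → ℝ :=
  fun y => if y ∈ ball x₀ r then φ y else (u y).toReal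

/-- `u` is an `(s,p)`-viscosity supersolution in `Ω`. -/
def IsViscositySupersol (s p : ℝ) (K : En n → En n → ℝ) (Ω : Set (En n))
    (u : En n → EReal) : Prop :=
  Measurable u ∧
  (∀ᵐ x : En n, u x < ⊤) ∧
  (∀ x ∈ Ω, ⊥ < u x) ∧
  LowerSemicontinuousOn u Ω ∧
  MemTailE n s p u ∧
  ∀ (x₀ : En n) (r : ℝ) (φ : En n → ℝ), 0 < r → ball x₀ r ⊆ Ω →
    ContDiffOn ℝ 2 φ (ball x₀ r) →
    ((φ x₀ : EReal) = u x₀) → (∀ x ∈ ball x₀ r, (φ x : EReal) ≤ u x) →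
    TestAdmissible n s p φ x₀ r →
    ∃ l : EReal, HasPV n p K (glue n u φ x₀ r) x₀ l ∧ 0 ≤ l

/-- `v` is an `(s,p)`-viscosity subsolution in `Ω`. -/
def IsViscositySubsol (s p : ℝ) (K : En n → En n → ℝ) (Ω : Set (En n))
    (v : En n → EReal) : Prop :=
  IsViscositySupersol n s p K Ω (fun x => -(v x))

/-- `u ∈ W^{s,p}_loc(Ω)`. -/
def MemWspLoc (s p : ℝ) (Ω : Set (En n)) (u : En n → ℝ) : Prop :=
  ∀ D : Set (En n), IsOpen D → IsCompact (closure D) → closure D ⊆ Ω →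
    (∫⁻ x in D, ENNReal.ofReal (|u x| ^ p) < ⊤) ∧
    (∫⁻ x in D, ∫⁻ y in D,
      ENNReal.ofReal (|u x - u y| ^ p * dist x y ^ (-(n : ℝ) - s * p)) < ⊤)

/-- `φ ∈ C_0^∞(D)`. -/
def IsTestFn (D : Set (En n)) (φ : En n → ℝ) : Prop :=
  ContDiff ℝ (⊤ : ℕ∞) φ ∧ HasCompactSupport φ ∧ tsupport φ ⊆ D

/-- The weak formulation energy pairing. -/
def weakEnergy (p : ℝ) (K : En n → En n → ℝ) (u φ : En n → ℝ) : ℝ :=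
  ∫ x : En n, ∫ y : En n, gp p (u x - u y) * (φ x - φ y) * K x y

/-- `u` is a weak solution of `Lu = 0` in `D`. -/
def IsWeakSolution (s p : ℝ) (K : En n → En n → ℝ) (D : Set (En n)) (u : En n → ℝ) : Prop :=
  MemWspLoc n s p D u ∧ MemTail n s p u ∧
  ∀ φ : En n → ℝ, IsTestFn n D φ → weakEnergy n p K u φ = 0

/-- `u` is a weak supersolution of `Lu = 0` in `D`. -/
def IsWeakSupersol (s p : ℝ) (K : En n → En n → ℝ) (D : Set (En n)) (u : En n → ℝ) : Prop :=
  MemWspLoc n s p D u ∧ MemTail n s p u ∧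
  ∀ φ : En n → ℝ, IsTestFn n D φ → (∀ x, 0 ≤ φ x) → 0 ≤ weakEnergy n p K u φ

/-- `u` is `(s,p)`-superharmonic in `Ω`. -/
def IsSuperharmonic (s p : ℝ) (K : En n → En n → ℝ) (Ω : Set (En n))
    (u : En n → EReal) : Prop :=
  Measurable u ∧
  (∀ᵐ x : En n, u x < ⊤) ∧
  (∀ x ∈ Ω, ⊥ < u x) ∧
  LowerSemicontinuousOn u Ω ∧
  MemTailE n s p u ∧
  ∀ D : Set (En n), IsOpen D → IsCompact (closure D) → closure D ⊆ Ω →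
    ∀ v : En n → ℝ, ContinuousOn v (closure D) → IsWeakSolution n s p K D v →
      (∀ x ∈ frontier D, (v x : EReal) ≤ u x) →
      (∀ᵐ x : En n, x ∉ D → (v x : EReal) ≤ u x) →
      ∀ x ∈ D, (v x : EReal) ≤ u x

/-- `essliminf_{y → x} u(y)`, realized as `sup_{r>0} essinf_{B_r(x)} u`. -/
def essLiminfAt (u : En n → EReal) (x : En n) : EReal :=
  ⨆ r ∈ Ioi (0 : ℝ), essInf u (volume.restrict (ball x r))

end FracP

namespace FracP


private lemma ii_congr {f g : ℝ → ℝ} {u v : ℝ} (h : IntervalIntegrable f volume u v)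
    (he : ∀ x ∈ Set.uIoc u v, f x = g x) : IntervalIntegrable g volume u v := by
  rw [intervalIntegrable_iff] at h ⊢
  exact h.congr_fun he measurableSet_uIoc

private lemma int01_le {f : ℝ → ℝ} {C : ℝ} (h : ∀ t ∈ Set.uIoc (0:ℝ) 1, |f t| ≤ C) :
    ∫ t in (0:ℝ)..1, f t ≤ C := by
  have h1 : ‖∫ t in (0:ℝ)..1, f t‖ ≤ C * |1 - 0| :=
    intervalIntegral.norm_integral_le_of_norm_le_const (by simpa [Real.norm_eq_abs] using h)
  have h2 := le_trans (le_abs_self _) h1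
  simpa using h2

private lemma base_int {p : ℝ} (hp : 1 < p) :
    ∫ t in (0:ℝ)..1, t ^ (p - 2) = 1 / (p - 1) := by
  rw [integral_rpow (Or.inl (by linarith))]
  have e : p - 2 + 1 = p - 1 := by ring
  rw [e, Real.one_rpow, Real.zero_rpow (sub_ne_zero.mpr (ne_of_gt hp)), sub_zero]

private lemma ae_ne_restrict (c : ℝ) (s : Set ℝ) :
    ∀ᵐ (t : ℝ) ∂(volume.restrict s), t ≠ c := by
  apply ae_restrict_of_ae
  rw [ae_iff]
  simp only [not_not, Set.setOf_eq_eq_singleton]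
  exact Real.volume_singleton

private lemma aux_out {p c : ℝ} (hp : 1 < p) (hp2 : p < 2) (hc : c ≤ 0 ∨ 1 ≤ c) :
    ∫ t in (0:ℝ)..1, |t - c| ^ (p - 2) ≤ 1 / (p - 1) := by
  have hr : (-1:ℝ) < p - 2 := by linarith
  rcases hc with hc | hc
  · have heq : Set.EqOn (fun t : ℝ => |t - c| ^ (p - 2)) (fun t => (t - c) ^ (p - 2))
        (Set.uIcc (0:ℝ) 1) := by
      intro x hx
      rw [Set.uIcc_of_le zero_le_one] at hx
      simp only
      rw [abs_of_nonneg (by linarith [hx.1])]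
    rw [intervalIntegral.integral_congr heq]
    have hint : IntervalIntegrable (fun t : ℝ => (t - c) ^ (p - 2)) volume 0 1 := by
      simpa using (intervalIntegral.intervalIntegrable_rpow' hr (a := -c) (b := 1 - c)).comp_sub_right c
    have hmono : (∫ t in (0:ℝ)..1, (t - c) ^ (p - 2)) ≤ ∫ t in (0:ℝ)..1, t ^ (p - 2) := by
      apply intervalIntegral.integral_mono_ae_restrict zero_le_one hint
        (intervalIntegral.intervalIntegrable_rpow' hr)
      filter_upwards [ae_restrict_mem measurableSet_Icc, ae_ne_restrict 0 _] with t ht ht0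
      exact Real.rpow_le_rpow_of_nonpos (lt_of_le_of_ne ht.1 (Ne.symm ht0))
        (by linarith) (by linarith)
    rw [base_int hp] at hmono
    exact hmono
  · have heq : Set.EqOn (fun t : ℝ => |t - c| ^ (p - 2)) (fun t => (c - t) ^ (p - 2))
        (Set.uIcc (0:ℝ) 1) := by
      intro x hx
      rw [Set.uIcc_of_le zero_le_one] at hx
      simp only
      rw [abs_of_nonpos (by linarith [hx.2]), neg_sub]
    rw [intervalIntegral.integral_congr heq]
    have hint : IntervalIntegrable (fun t : ℝ => (c - t) ^ (p - 2)) volume 0 1 := by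
      simpa using (intervalIntegral.intervalIntegrable_rpow' hr (a := c) (b := c - 1)).comp_sub_left c
    have hint2 : IntervalIntegrable (fun t : ℝ => (1 - t) ^ (p - 2)) volume 0 1 := by
      simpa using (intervalIntegral.intervalIntegrable_rpow' hr (a := (1:ℝ)) (b := 0)).comp_sub_left 1
    have hmono : (∫ t in (0:ℝ)..1, (c - t) ^ (p - 2)) ≤
        ∫ t in (0:ℝ)..1, (1 - t) ^ (p - 2) := by
      apply intervalIntegral.integral_mono_ae_restrict zero_le_one hint hint2
      filter_upwards [ae_restrict_mem measurableSet_Icc, ae_ne_restrict 1 _] with t ht ht1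
      exact Real.rpow_le_rpow_of_nonpos
        (sub_pos.mpr (lt_of_le_of_ne ht.2 ht1)) (by linarith) (by linarith)
    have hval : (∫ t in (0:ℝ)..1, (1 - t) ^ (p - 2)) = 1 / (p - 1) := by
      rw [intervalIntegral.integral_comp_sub_left (fun u : ℝ => u ^ (p - 2)) 1]
      simp only [sub_self, sub_zero]
      exact base_int hp
    rw [hval] at hmono
    exact hmono

private lemma aux_in {p c : ℝ} (hp : 1 < p) (hp2 : p < 2) (hc0 : 0 ≤ c) (hc1 : c ≤ 1) :
    ∫ t in (0:ℝ)..1, |t - c| ^ (p - 2) =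
      (c ^ (p - 1) + (1 - c) ^ (p - 1)) / (p - 1) := by
  have hr : (-1:ℝ) < p - 2 := by linarith
  have e : p - 2 + 1 = p - 1 := by ring
  have i1 : IntervalIntegrable (fun t : ℝ => |t - c| ^ (p - 2)) volume 0 c := by
    apply ii_congr (f := fun t : ℝ => (c - t) ^ (p - 2))
    · simpa using (intervalIntegral.intervalIntegrable_rpow' hr (a := c) (b := 0)).comp_sub_left c
    · intro x hx
      rw [Set.uIoc_of_le hc0] at hx
      rw [abs_of_nonpos (by linarith [hx.2]), neg_sub]
  have i2 : IntervalIntegrable (fun t : ℝ => |t - c| ^ (p - 2)) volume c 1 := by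
    apply ii_congr (f := fun t : ℝ => (t - c) ^ (p - 2))
    · simpa using (intervalIntegral.intervalIntegrable_rpow' hr (a := (0:ℝ)) (b := 1 - c)).comp_sub_right c
    · intro x hx
      rw [Set.uIoc_of_le hc1] at hx
      rw [abs_of_nonneg (by linarith [hx.1])]
  have split := intervalIntegral.integral_add_adjacent_intervals i1 i2
  have v1 : (∫ t in (0:ℝ)..c, |t - c| ^ (p - 2)) = c ^ (p - 1) / (p - 1) := by
    have heq : Set.EqOn (fun t : ℝ => |t - c| ^ (p - 2)) (fun t => (c - t) ^ (p - 2))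
        (Set.uIcc (0:ℝ) c) := by
      intro x hx
      rw [Set.uIcc_of_le hc0] at hx
      simp only
      rw [abs_of_nonpos (by linarith [hx.2]), neg_sub]
    rw [intervalIntegral.integral_congr heq,
      intervalIntegral.integral_comp_sub_left (fun u : ℝ => u ^ (p - 2)) c]
    simp only [sub_self, sub_zero]
    rw [integral_rpow (Or.inl hr), e, Real.zero_rpow (sub_ne_zero.mpr (ne_of_gt hp))]
    ring
  have v2 : (∫ t in c..(1:ℝ), |t - c| ^ (p - 2)) = (1 - c) ^ (p - 1) / (p - 1) := by
    have heq : Set.EqOn (fun t : ℝ => |t - c| ^ (p - 2)) (fun t => (t - c) ^ (p - 2))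
        (Set.uIcc c (1:ℝ)) := by
      intro x hx
      rw [Set.uIcc_of_le hc1] at hx
      simp only
      rw [abs_of_nonneg (by linarith [hx.1])]
    rw [intervalIntegral.integral_congr heq,
      intervalIntegral.integral_comp_sub_right (fun u : ℝ => u ^ (p - 2)) c]
    simp only [sub_self]
    rw [integral_rpow (Or.inl hr), e, Real.zero_rpow (sub_ne_zero.mpr (ne_of_gt hp))]
    ring
  rw [← split, v1, v2]
  ring

private lemma concav {p c : ℝ} (hp : 1 < p) (hp2 : p < 2) (hc0 : 0 ≤ c) (hc1 : c ≤ 1) :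
    c ^ (p - 1) + (1 - c) ^ (p - 1) ≤ 2 ^ (2 - p) := by
  have h := (Real.concaveOn_rpow (p := p - 1) (by linarith) (by linarith)).2
    (Set.mem_Ici.mpr hc0) (Set.mem_Ici.mpr (by linarith : (0:ℝ) ≤ 1 - c))
    (by norm_num : (0:ℝ) ≤ 1/2) (by norm_num : (0:ℝ) ≤ 1/2) (by norm_num)
  simp only [smul_eq_mul] at h
  have e : (1/2 : ℝ) * c + (1/2) * (1 - c) = 1/2 := by ring
  rw [e] at h
  have e2 : 2 * ((1:ℝ)/2) ^ (p - 1) = 2 ^ (2 - p) := by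
    rw [show (1:ℝ)/2 = 2⁻¹ by norm_num, Real.inv_rpow (by norm_num : (0:ℝ) ≤ 2),
      ← Real.rpow_neg (by norm_num : (0:ℝ) ≤ 2)]
    nth_rewrite 1 [show (2:ℝ) = 2 ^ (1:ℝ) by rw [Real.rpow_one]]
    rw [← Real.rpow_add (by norm_num : (0:ℝ) < 2)]
    congr 1
    ring
  linarith

private lemma div_rpow_eq {M k r : ℝ} (hM : 0 ≤ M) (hk : 0 < k) :
    (M / k) ^ r = k ^ (-r) * M ^ r := by
  rw [Real.div_rpow hM hk.le, div_eq_mul_inv, ← Real.rpow_neg hk.le, mul_comm]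

private lemma four_eq : ∀ x : ℝ, (2:ℝ) ^ x * (2:ℝ) ^ x = (4:ℝ) ^ x := by
  intro x
  rw [show (4:ℝ) = 2 * 2 by norm_num,
    Real.mul_rpow (by norm_num : (0:ℝ) ≤ 2) (by norm_num : (0:ℝ) ≤ 2)]

/- STATEMENT 4 -/
theorem stmt4 (p a b : ℝ) (hp : 1 < p) (hab : ¬(a = 0 ∧ b = 0)) :
    ∫ t in (0:ℝ)..1, |a + b * t| ^ (p - 2) ≤
      (if 2 ≤ p then 1 else 4 ^ (2 - p) / (p - 1)) * (|a| + |b|) ^ (p - 2) := by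
  have hM : 0 < |a| + |b| := by
    rcases not_and_or.mp hab with h | h
    · linarith [abs_nonneg b, abs_pos.mpr h]
    · linarith [abs_nonneg a, abs_pos.mpr h]
  rcases le_or_gt 2 p with h2 | h2
  · rw [if_pos h2, one_mul]
    apply int01_le
    intro t ht
    rw [Set.uIoc_of_le zero_le_one] at ht
    rw [abs_of_nonneg (Real.rpow_nonneg (abs_nonneg _) _)]
    apply Real.rpow_le_rpow (abs_nonneg _) ?_ (by linarith)
    calc |a + b * t| ≤ |a| + |b * t| := abs_add_le _ _
      _ = |a| + |b| * t := by rw [abs_mul, abs_of_pos ht.1]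
      _ ≤ |a| + |b| := by nlinarith [abs_nonneg b, ht.2]
  · rw [if_neg (not_le.mpr h2)]
    have hr : (-1:ℝ) < p - 2 := by linarith
    have hrneg : p - 2 ≤ 0 := by linarith
    have hMr : 0 < (|a| + |b|) ^ (p - 2) := Real.rpow_pos_of_pos hM _
    rcases le_or_gt (4 * |b|) (|a| + |b|) with hbig | hbig
    · -- pointwise bound case
      have hbound : ∀ t ∈ Set.uIoc (0:ℝ) 1,
          abs (|a + b * t| ^ (p - 2)) ≤ ((|a| + |b|) / 2) ^ (p - 2) := by
        intro t ht
        rw [Set.uIoc_of_le zero_le_one] at ht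
        rw [abs_of_nonneg (Real.rpow_nonneg (abs_nonneg _) _)]
        apply Real.rpow_le_rpow_of_nonpos (by linarith) ?_ hrneg
        have h1 : |a| ≤ |a + b * t| + |b| * t := by
          calc |a| = |(a + b * t) + (-(b * t))| := by ring_nf
            _ ≤ |a + b * t| + |(-(b * t))| := abs_add_le _ _
            _ = |a + b * t| + |b| * t := by rw [abs_neg, abs_mul, abs_of_pos ht.1]
        have h2 : |b| * t ≤ |b| := by nlinarith [abs_nonneg b, ht.2, ht.1.le]
        linarith
      refine le_trans (int01_le hbound) ?_
      rw [div_rpow_eq hM.le (by norm_num : (0:ℝ) < 2), show -(p-2) = 2 - p by ring]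
      have h24 : (2:ℝ) ^ (2 - p) ≤ (4:ℝ) ^ (2 - p) :=
        Real.rpow_le_rpow (by norm_num) (by norm_num) (by linarith)
      have h4pos : (0:ℝ) < (4:ℝ) ^ (2 - p) := Real.rpow_pos_of_pos (by norm_num) _
      have h4 : (4:ℝ) ^ (2 - p) ≤ (4:ℝ) ^ (2 - p) / (p - 1) := by
        rw [le_div_iff₀ (by linarith : (0:ℝ) < p - 1)]
        nlinarith
      have := mul_le_mul_of_nonneg_right (le_trans h24 h4) hMr.le
      linarith
    · -- substitution case
      have hb0 : b ≠ 0 := by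
        intro h
        rw [h] at hbig
        simp only [abs_zero, mul_zero] at hbig
        linarith [abs_nonneg a]
      have habs : 0 < |b| := abs_pos.mpr hb0
      have key : ∀ t : ℝ, |a + b * t| ^ (p - 2) =
          |b| ^ (p - 2) * |t - (-a/b)| ^ (p - 2) := by
        intro t
        have hx : a + b * t = b * (t - (-a/b)) := by field_simp; ring
        rw [hx, abs_mul, Real.mul_rpow (abs_nonneg _) (abs_nonneg _)]
      have hre : (∫ t in (0:ℝ)..1, |a + b * t| ^ (p - 2)) =
          |b| ^ (p - 2) * ∫ t in (0:ℝ)..1, |t - (-a/b)| ^ (p - 2) := by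
        rw [← intervalIntegral.integral_const_mul]
        exact intervalIntegral.integral_congr (fun x _ => key x)
      rw [hre]
      have hbr : 0 < |b| ^ (p - 2) := Real.rpow_pos_of_pos habs _
      by_cases hcc : -a/b ∈ Set.Icc (0:ℝ) 1
      · -- zero of the affine map inside [0,1]; here |a| ≤ |b|
        have hab2 : |a| ≤ |b| := by
          have h1 : |(-a/b)| ≤ 1 := abs_le.mpr ⟨by linarith [hcc.1], hcc.2⟩
          have e : |(-a/b)| = |a| / |b| := by
            rw [abs_div, abs_neg]
          rw [e] at h1
          exact (div_le_one habs).mp h1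
        have hint_le : (∫ t in (0:ℝ)..1, |t - (-a/b)| ^ (p - 2)) ≤
            2 ^ (2 - p) / (p - 1) := by
          rw [aux_in hp h2 hcc.1 hcc.2]
          exact (div_le_div_iff_of_pos_right (by linarith : (0:ℝ) < p - 1)).mpr
            (concav hp h2 hcc.1 hcc.2)
        have hB0 : (0:ℝ) ≤ 2 ^ (2 - p) / (p - 1) :=
          div_nonneg (Real.rpow_nonneg (by norm_num) _) (by linarith)
        calc |b| ^ (p - 2) * ∫ t in (0:ℝ)..1, |t - (-a/b)| ^ (p - 2) ≤
            |b| ^ (p - 2) * (2 ^ (2 - p) / (p - 1)) :=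
              mul_le_mul_of_nonneg_left hint_le hbr.le
          _ ≤ ((|a| + |b|) / 2) ^ (p - 2) * (2 ^ (2 - p) / (p - 1)) :=
              mul_le_mul_of_nonneg_right
                (Real.rpow_le_rpow_of_nonpos (by linarith) (by linarith) hrneg) hB0
          _ = 4 ^ (2 - p) / (p - 1) * (|a| + |b|) ^ (p - 2) := by
              rw [div_rpow_eq hM.le (by norm_num : (0:ℝ) < 2),
                show -(p-2) = 2 - p by ring, ← four_eq (2 - p)]
              ring
      · -- zero outside [0,1]
        have hout : -a/b ≤ 0 ∨ 1 ≤ -a/b := by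
          rcases le_or_gt (-a/b) 0 with h | h
          · exact Or.inl h
          · right
            by_contra hlt
            push_neg at hlt
            exact hcc ⟨h.le, hlt.le⟩
        have hIle := aux_out hp h2 hout
        have hB0 : (0:ℝ) ≤ 1 / (p - 1) := div_nonneg zero_le_one (by linarith)
        calc |b| ^ (p - 2) * ∫ t in (0:ℝ)..1, |t - (-a/b)| ^ (p - 2) ≤
            |b| ^ (p - 2) * (1 / (p - 1)) := mul_le_mul_of_nonneg_left hIle hbr.le
          _ ≤ ((|a| + |b|) / 4) ^ (p - 2) * (1 / (p - 1)) :=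
              mul_le_mul_of_nonneg_right
                (Real.rpow_le_rpow_of_nonpos (by linarith) (by linarith) hrneg) hB0
          _ = 4 ^ (2 - p) / (p - 1) * (|a| + |b|) ^ (p - 2) := by
              rw [div_rpow_eq hM.le (by norm_num : (0:ℝ) < 4),
                show -(p-2) = 2 - p by ring]
              ring

end FracP
end
end

section
/- Let p > 1 and a,b ∈ ℝ with (a,b) ≠ (0,0). Then ∫₀¹ |a + bt|^{p−2} dt ≥ c_p (|a| + |b|)^{p−2}, where c_p := 1 if 1 < p < 2 and c_p := 4^{2−p}/(p−1) if p ≥ 2. -/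
open MeasureTheory Filter Set Metric Topology
open scoped ENNReal NNReal

noncomputable section

namespace FracP

/-! By the symmetry `(a, b) ↦ (-a, -b)` we may take `b ≥ 0`, and for `b > 0` the substitution
`x = a + b t` turns the integral into `b⁻¹ ∫_a^{a+b} |x|^{p-2} dx`. For `p ≤ 2` the integrand is
at least `(|a| + b)^{p-2}` on `[a, a + b]`. For `p ≥ 2` we integrate exactly: `gp p x = |x|^{p-2} x`
is a primitive of `(p - 1) |x|^{p-2}`, and its increment over `[a, a + b]` is at least
`((|a| + b) / 4)^{p-2} b`, by monotonicity of `x ↦ x^{p-2}` when the interval misses `0` and by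
convexity of `x ↦ x^{p-1}` when it contains `0`. -/

lemma gp_neg (p x : ℝ) : gp p (-x) = -gp p x := by
  simp only [gp, abs_neg, mul_neg]

lemma gp_of_nonneg {p x : ℝ} (hp : p ≠ 1) (hx : 0 ≤ x) : gp p x = x ^ (p - 1) := by
  rw [gp, abs_of_nonneg hx, ← Real.rpow_add_one' hx (by contrapose! hp; linarith)]
  ring_nf

lemma rpow_mul_sub_le_gp_sub_gp {p : ℝ} (hp : 2 ≤ p) {u v : ℝ} (hu : 0 ≤ u) (huv : u ≤ v) :
    v ^ (p - 2) * (v - u) ≤ gp p v - gp p u := by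
  have : u ^ (p - 2) * u ≤ v ^ (p - 2) * u :=
    mul_le_mul_of_nonneg_right (Real.rpow_le_rpow hu huv (by linarith)) hu
  simp only [gp, abs_of_nonneg hu, abs_of_nonneg (hu.trans huv)]
  linarith

lemma two_mul_add_div_two_rpow_le {s : ℝ} (hs : 1 ≤ s) {u v : ℝ} (hu : 0 ≤ u) (hv : 0 ≤ v) :
    2 * ((u + v) / 2) ^ s ≤ u ^ s + v ^ s := by
  have h := (convexOn_rpow hs).2 hu hv (by norm_num : (0 : ℝ) ≤ 1 / 2)
    (by norm_num : (0 : ℝ) ≤ 1 / 2) (by norm_num)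
  simp only [smul_eq_mul] at h
  rw [show (u + v) / 2 = 1 / 2 * u + 1 / 2 * v by ring]
  linarith

lemma div_four_rpow_mul_le_gp_sub_gp {p : ℝ} (hp : 2 ≤ p) (a : ℝ) {b : ℝ} (hb : 0 < b) :
    ((|a| + b) / 4) ^ (p - 2) * b ≤ gp p (a + b) - gp p a := by
  have hq : 0 ≤ p - 2 := by linarith
  rcases le_total 0 a with ha | ha
  · calc ((|a| + b) / 4) ^ (p - 2) * b ≤ (a + b) ^ (p - 2) * (a + b - a) := by
          rw [abs_of_nonneg ha, add_sub_cancel_left]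
          gcongr
          linarith
      _ ≤ gp p (a + b) - gp p a := rpow_mul_sub_le_gp_sub_gp hp ha (by linarith)
  rw [abs_of_nonpos ha]
  rcases le_total (a + b) 0 with hab | hab
  · calc ((-a + b) / 4) ^ (p - 2) * b ≤ (-a) ^ (p - 2) * (-a - -(a + b)) := by
          rw [show -a - -(a + b) = b by ring]
          exact mul_le_mul_of_nonneg_right
            (Real.rpow_le_rpow (by linarith) (by linarith) hq) hb.le
      _ ≤ gp p (-a) - gp p (-(a + b)) := rpow_mul_sub_le_gp_sub_gp hp (by linarith) (by linarith)
      _ = gp p (a + b) - gp p a := by rw [gp_neg, gp_neg]; ring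
  · calc ((-a + b) / 4) ^ (p - 2) * b ≤ (b / 2) ^ (p - 2) * b :=
          mul_le_mul_of_nonneg_right (Real.rpow_le_rpow (by linarith) (by linarith) hq) hb.le
      _ = 2 * ((-a + (a + b)) / 2) ^ (p - 1) := by
          rw [neg_add_cancel_left, show p - 1 = p - 2 + 1 by ring,
            Real.rpow_add_one' (by positivity) (by linarith)]
          ring
      _ ≤ (-a) ^ (p - 1) + (a + b) ^ (p - 1) :=
          two_mul_add_div_two_rpow_le (by linarith) (by linarith) hab
      _ = gp p (a + b) - gp p a := by
          rw [← gp_of_nonneg (by linarith) hab, ← gp_of_nonneg (by linarith) (by linarith),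
            gp_neg]
          ring

lemma intervalIntegrable_abs_rpow {r : ℝ} (hr : -1 < r) (c d : ℝ) :
    IntervalIntegrable (fun x : ℝ => |x| ^ r) volume c d := by
  have of_nonneg : ∀ c : ℝ, 0 ≤ c → IntervalIntegrable (fun x : ℝ => |x| ^ r) volume 0 c :=
    fun c hc ↦ (intervalIntegral.intervalIntegrable_rpow' hr).congr fun x hx ↦ by
      rw [uIoc_of_le hc] at hx
      simp only [abs_of_pos hx.1]
  have from_zero : ∀ c : ℝ, IntervalIntegrable (fun x : ℝ => |x| ^ r) volume 0 c := by
    intro c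
    rcases le_total 0 c with hc | hc
    · exact of_nonneg c hc
    · rw [IntervalIntegrable.iff_comp_neg, neg_zero]
      simpa only [abs_neg] using of_nonneg (-c) (neg_nonneg.mpr hc)
  exact (from_zero c).symm.trans (from_zero d)

lemma integral_abs_rpow_from_zero {p : ℝ} (hp : 1 < p) (c : ℝ) :
    ∫ x in (0 : ℝ)..c, |x| ^ (p - 2) = gp p c / (p - 1) := by
  have of_nonneg : ∀ c : ℝ, 0 ≤ c → ∫ x in (0 : ℝ)..c, |x| ^ (p - 2) = gp p c / (p - 1) := by
    intro c hc
    have habs : EqOn (fun x : ℝ => |x| ^ (p - 2)) (fun x => x ^ (p - 2)) (uIcc 0 c) :=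
      fun x hx ↦ by
        rw [uIcc_of_le hc] at hx
        simp only [abs_of_nonneg hx.1]
    rw [intervalIntegral.integral_congr habs, integral_rpow (Or.inl (by linarith)), gp,
      abs_of_nonneg hc, ← Real.rpow_add_one' hc (by linarith),
      Real.zero_rpow (by linarith), sub_zero, show p - 2 + 1 = p - 1 by ring]
  rcases le_total 0 c with hc | hc
  · exact of_nonneg c hc
  · have h := of_nonneg (-c) (neg_nonneg.mpr hc)
    rw [← neg_zero, ← intervalIntegral.integral_comp_neg, gp_neg] at h
    simp only [abs_neg] at h
    rw [intervalIntegral.integral_symm, h, neg_div, neg_neg]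

lemma integral_abs_rpow {p : ℝ} (hp : 1 < p) (a c : ℝ) :
    ∫ x in a..c, |x| ^ (p - 2) = (gp p c - gp p a) / (p - 1) := by
  have hr : (-1 : ℝ) < p - 2 := by linarith
  rw [← intervalIntegral.integral_interval_sub_left (intervalIntegrable_abs_rpow hr 0 c)
    (intervalIntegrable_abs_rpow hr 0 a), integral_abs_rpow_from_zero hp,
    integral_abs_rpow_from_zero hp, sub_div]

lemma integral_abs_add_mul_rpow (r a : ℝ) {b : ℝ} (hb : b ≠ 0) :
    ∫ t in (0 : ℝ)..1, |a + b * t| ^ r = b⁻¹ * ∫ x in a..a + b, |x| ^ r := by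
  simp [intervalIntegral.integral_comp_add_mul (fun x => |x| ^ r) hb]

lemma mul_rpow_le_integral_abs_rpow_of_le_two {p : ℝ} (hp : 1 < p) (hp2 : p ≤ 2) (a : ℝ)
    {b : ℝ} (hb : 0 ≤ b) : b * (|a| + b) ^ (p - 2) ≤ ∫ x in a..a + b, |x| ^ (p - 2) := by
  -- `0 ^ (p - 2) = 0` for `p < 2`, so the pointwise bound fails at `x = 0`.
  have hle : ∀ᵐ x ∂volume.restrict (Icc a (a + b)), (|a| + b) ^ (p - 2) ≤ |x| ^ (p - 2) := by
    have hne : ∀ᵐ x ∂volume.restrict (Icc a (a + b)), x ≠ 0 :=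
      ae_restrict_of_ae (volume.ae_ne 0)
    filter_upwards [ae_restrict_mem measurableSet_Icc, hne] with x hx hx0
    refine Real.rpow_le_rpow_of_nonpos (abs_pos.mpr hx0) ?_ (by linarith)
    rw [abs_le]
    constructor <;> linarith [hx.1, hx.2, le_abs_self a, neg_abs_le a]
  calc b * (|a| + b) ^ (p - 2) = ∫ _ in a..a + b, (|a| + b) ^ (p - 2) := by simp
    _ ≤ ∫ x in a..a + b, |x| ^ (p - 2) :=
      intervalIntegral.integral_mono_ae_restrict (by linarith) intervalIntegrable_const
        (intervalIntegrable_abs_rpow (by linarith) _ _) hle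

lemma mul_four_rpow_le_integral_abs_rpow_of_two_le {p : ℝ} (hp : 2 ≤ p) (a : ℝ) {b : ℝ}
    (hb : 0 < b) :
    b * (4 ^ (2 - p) / (p - 1) * (|a| + b) ^ (p - 2)) ≤ ∫ x in a..a + b, |x| ^ (p - 2) := by
  have hM : 4 ^ (2 - p) * (|a| + b) ^ (p - 2) = ((|a| + b) / 4) ^ (p - 2) := by
    rw [Real.div_rpow (by positivity) (by norm_num), show 2 - p = -(p - 2) by ring,
      Real.rpow_neg (by norm_num)]
    ring
  have hp1 : 0 < p - 1 := by linarith
  rw [integral_abs_rpow (by linarith), le_div_iff₀ hp1]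
  calc b * (4 ^ (2 - p) / (p - 1) * (|a| + b) ^ (p - 2)) * (p - 1)
      = ((|a| + b) / 4) ^ (p - 2) * b := by rw [← hM]; field_simp
    _ ≤ gp p (a + b) - gp p a := div_four_rpow_mul_le_gp_sub_gp hp a hb

theorem stmt5_general (p a b : ℝ) (hp : 1 < p) :
    (if p < 2 then 1 else 4 ^ (2 - p) / (p - 1)) * (|a| + |b|) ^ (p - 2) ≤
      ∫ t in (0:ℝ)..1, |a + b * t| ^ (p - 2) := by
  wlog hb : 0 ≤ b generalizing a b
  · have h := this (-a) (-b) (by linarith)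
    simp only [abs_neg, neg_mul, ← neg_add] at h
    exact h
  rcases hb.eq_or_lt with rfl | hb
  · have hc : (if p < 2 then 1 else 4 ^ (2 - p) / (p - 1) : ℝ) ≤ 1 := by
      split_ifs with hp2
      · exact le_rfl
      · rw [div_le_one (by linarith)]
        linarith [Real.rpow_le_one_of_one_le_of_nonpos (by norm_num : (1 : ℝ) ≤ 4)
          (by linarith : 2 - p ≤ 0)]
    simpa using mul_le_of_le_one_left (by positivity) hc
  rw [integral_abs_add_mul_rpow _ _ hb.ne', abs_of_pos hb, le_inv_mul_iff₀ hb]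
  split_ifs with hp2
  · simpa only [one_mul] using mul_rpow_le_integral_abs_rpow_of_le_two hp hp2.le a hb.le
  · exact mul_four_rpow_le_integral_abs_rpow_of_two_le (not_lt.mp hp2) a hb

theorem stmt5 (p a b : ℝ) (hp : 1 < p) (hab : ¬(a = 0 ∧ b = 0)) :
    (if p < 2 then 1 else 4 ^ (2 - p) / (p - 1)) * (|a| + |b|) ^ (p - 2) ≤
      ∫ t in (0:ℝ)..1, |a + b * t| ^ (p - 2) :=
  stmt5_general p a b hp

end FracP
end
end

section
/- Let n ≥ 1, p > 1, let e ∈ ℝⁿ be a unit vector, and let a ≥ 0. Then ∫_{S^{n−1}} (|e·ω| + a)^{p−2} dω ≤ c (1 + a)^{p−2}, where S^{n−1} is the unit sphere in ℝⁿ with its surface measure and c depends only on n and p. -/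
open MeasureTheory Filter Set Metric Topology
open scoped ENNReal NNReal

noncomputable section

/-!
Rotating `e` to a coordinate vector, it suffices to bound the integral of `(|ω k| + a) ^ q`,
`q = p - 2`, over the unit sphere `S ⊆ ℝ^(m+1)`. The heart of the matter is that the band
`{ω ∈ S : |ω k| ≤ t}` has `μH[m]`-measure `O(t)`: `S` is covered by the caps `{±ω i ≥ 1/(m+1)}`,
on each of which the projection forgetting the `i`-th coordinate has a Lipschitz inverse, and for
`i ≠ k` this projection maps the band into a slab of width `2t` of the cube `[-1,1]^m`. By the
layer-cake formula `|ω k| ^ q` is then integrable for `-1 < q < 0`, and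
`(|ω k| + a) ^ q ≤ ((1 + a) / 2) ^ q * |ω k| ^ q` gives the bound. For `q ≥ 0` the integrand is
at most `(1 + a) ^ q`.
-/

section

variable {m : ℕ}

theorem EuclideanSpace.sq_apply_add_sum_sq_removeNth (x : En (m + 1)) (i : Fin (m + 1)) :
    x i ^ 2 + ∑ j, Fin.removeNth i x.ofLp j ^ 2 = ‖x‖ ^ 2 := by
  rw [EuclideanSpace.real_norm_sq_eq, Fin.sum_univ_succAbove _ i]
  rfl

theorem EuclideanSpace.dist_sq_eq_sq_add_sum_sq_removeNth (x y : En (m + 1)) (i : Fin (m + 1)) :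
    dist x y ^ 2 =
      (x i - y i) ^ 2 + ∑ j, (Fin.removeNth i x.ofLp j - Fin.removeNth i y.ofLp j) ^ 2 := by
  rw [dist_eq_norm, ← EuclideanSpace.sq_apply_add_sum_sq_removeNth]
  rfl

theorem EuclideanSpace.abs_apply_le_one {n : ℕ} {x : En n} (hx : ‖x‖ = 1) (l : Fin n) :
    |x l| ≤ 1 := by
  simpa [hx] using PiLp.norm_apply_le x l

theorem EuclideanSpace.exists_inv_le_abs_apply {x : En (m + 1)} (hx : ‖x‖ = 1) :
    ∃ i, ((m : ℝ) + 1)⁻¹ ≤ |x i| := by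
  by_contra! hsmall
  have hsq : ∀ i, x i ^ 2 < ((m : ℝ) + 1)⁻¹ := fun i => by
    have h1 : ((m : ℝ) + 1)⁻¹ ≤ 1 := inv_le_one_of_one_le₀ (by linarith [m.cast_nonneg (α := ℝ)])
    rw [← sq_abs]
    nlinarith [abs_nonneg (x i), hsmall i]
  have := Finset.sum_lt_sum_of_nonempty Finset.univ_nonempty fun i _ => hsq i
  rw [← EuclideanSpace.real_norm_sq_eq, hx] at this
  simp [field] at this

theorem EuclideanSpace.exists_linearIsometryEquiv_inner_eq_apply {n : ℕ} {e : En n}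
    (he : ‖e‖ = 1) (i : Fin n) : ∃ L : En n ≃ₗᵢ[ℝ] En n, ∀ ω, inner ℝ e ω = L ω i := by
  have he' : Orthonormal ℝ (({i} : Set (Fin n)).domRestrict fun _ => e) :=
    ⟨fun _ => he, fun j j' hjj' => absurd (Subsingleton.elim j j') hjj'⟩
  obtain ⟨b, hb⟩ := he'.exists_orthonormalBasis_extension_of_card_eq (by simp)
  exact ⟨b.repr, fun ω => by rw [b.repr_apply_apply, hb i rfl]⟩

theorem hausdorffMeasure_le_mul_image_of_dist_le {X Y : Type*} [MetricSpace X] [MetricSpace Y]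
    [MeasurableSpace X] [BorelSpace X] [MeasurableSpace Y] [BorelSpace Y] {f : X → Y} {s : Set X}
    {K : ℝ≥0} (h : ∀ x ∈ s, ∀ y ∈ s, dist x y ≤ K * dist (f x) (f y)) {d : ℝ} (hd : 0 ≤ d) :
    μH[d] s ≤ K ^ d * μH[d] (f '' s) := by
  have hf : AntilipschitzWith K (f ∘ ((↑) : s → X)) :=
    AntilipschitzWith.of_le_mul_dist fun x y => h x x.2 y y.2
  have hs := (isometry_subtype_coe (s := s)).hausdorffMeasure_image (Or.inl hd) univ
  have hfs := hf.le_hausdorffMeasure_image hd univ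
  rw [image_univ, Subtype.range_coe] at hs
  rw [image_univ, range_comp, Subtype.range_coe] at hfs
  rwa [hs]

theorem volume_cube_eq {ι : Type*} [Fintype ι] :
    volume {x : ι → ℝ | ∀ j, |x j| ≤ 1} = 2 ^ Fintype.card ι := by
  have hcube : {x : ι → ℝ | ∀ j, |x j| ≤ 1} = Icc (-1) 1 := by
    ext x
    simp only [mem_ofPred_eq, abs_le, mem_Icc, Pi.le_def, Pi.neg_apply, Pi.one_apply]
    exact forall_and
  rw [hcube, Real.volume_Icc_pi]
  norm_num

theorem volume_cube_inter_slab_le {ι : Type*} [Fintype ι] (j₀ : ι) (t : ℝ) :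
    volume ({x : ι → ℝ | ∀ j, |x j| ≤ 1} ∩ {x | |x j₀| ≤ t}) ≤
      2 ^ Fintype.card ι * ENNReal.ofReal t := by
  classical
  set r : ι → ℝ := Function.update 1 j₀ t
  have hsub : {x : ι → ℝ | ∀ j, |x j| ≤ 1} ∩ {x | |x j₀| ≤ t} ⊆ Icc (-r) r := by
    rintro x ⟨hx, hx₀ : |x j₀| ≤ t⟩
    refine ⟨fun j => ?_, fun j => ?_⟩ <;>
    · rcases eq_or_ne j j₀ with rfl | hj
      · have := abs_le.1 hx₀; simp [r]; linarith
      · have := abs_le.1 (hx j); simp [r, hj]; linarith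
  have hside : ∀ j, ENNReal.ofReal (r j - (-r) j) =
      2 * Function.update (1 : ι → ℝ≥0∞) j₀ (ENNReal.ofReal t) j := by
    intro j
    rcases eq_or_ne j j₀ with rfl | hj
    · simp [r, ← two_mul, ENNReal.ofReal_mul]
    · simp [r, hj, ← two_mul]
  refine (measure_mono hsub).trans_eq ?_
  simp_rw [Real.volume_Icc_pi, hside, Finset.prod_mul_distrib,
    Finset.prod_update_of_mem (Finset.mem_univ _)]
  simp

theorem Real.rpow_add_le_div_two_rpow_mul {q x a : ℝ} (hq : q < 0) (hx₀ : 0 < x) (hx₁ : x ≤ 1)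
    (ha : 0 ≤ a) : (x + a) ^ q ≤ ((1 + a) / 2) ^ q * x ^ q := by
  rcases le_total a 1 with ha₁ | ha₁
  · calc (x + a) ^ q ≤ x ^ q := Real.rpow_le_rpow_of_nonpos hx₀ (by linarith) hq.le
      _ ≤ ((1 + a) / 2) ^ q * x ^ q :=
        le_mul_of_one_le_left (by positivity)
          (Real.one_le_rpow_of_pos_of_le_one_of_nonpos (by positivity) (by linarith) hq.le)
  · calc (x + a) ^ q ≤ ((1 + a) / 2) ^ q :=
          Real.rpow_le_rpow_of_nonpos (by positivity) (by linarith) hq.le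
      _ ≤ ((1 + a) / 2) ^ q * x ^ q :=
        le_mul_of_one_le_right (by positivity)
          (Real.one_le_rpow_of_pos_of_le_one_of_nonpos hx₀ hx₁ hq.le)

theorem integrable_rpow_of_measure_le_mul {X : Type*} [MeasurableSpace X] {μ : Measure X}
    [IsFiniteMeasure μ] {g : X → ℝ} (hg : Measurable g) (hg₀ : ∀ x, 0 ≤ g x) {C : ℝ≥0∞}
    (hC : C ≠ ∞) (hμ : ∀ t, 0 ≤ t → μ {x | g x ≤ t} ≤ C * ENNReal.ofReal t) {q : ℝ}
    (hq : -1 < q) (hq₀ : q < 0) : Integrable (fun x => g x ^ q) μ := by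
  have hnn : 0 ≤ᵐ[μ] fun x => g x ^ q := ae_of_all _ fun x => Real.rpow_nonneg (hg₀ x) q
  refine ⟨(hg.pow_const q).aestronglyMeasurable, (hasFiniteIntegral_iff_ofReal hnn).2 ?_⟩
  -- layer cake: `g ^ q > t` forces `g < t ^ q⁻¹`, a set of measure `O(t ^ q⁻¹)` with `q⁻¹ < -1`
  have htail : ∀ t ∈ Ioi (1 : ℝ), μ {x | t < g x ^ q} ≤ C * ENNReal.ofReal (t ^ q⁻¹) := by
    intro t (ht : 1 < t)
    refine (measure_mono fun x (hx : t < g x ^ q) => ?_).trans (hμ _ (by positivity))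
    rcases (hg₀ x).eq_or_lt with hx₀ | hx₀
    · rw [← hx₀, Real.zero_rpow hq₀.ne] at hx; linarith
    · show g x ≤ t ^ q⁻¹
      calc g x = (g x ^ q) ^ q⁻¹ := (Real.rpow_rpow_inv hx₀.le hq₀.ne).symm
        _ ≤ t ^ q⁻¹ := (Real.rpow_lt_rpow_of_neg (by linarith) hx (inv_lt_zero.2 hq₀)).le
  have hint : IntegrableOn (fun t : ℝ => t ^ q⁻¹) (Ioi 1) :=
    integrableOn_Ioi_rpow_of_lt (by rwa [inv_lt_of_neg hq₀ (by norm_num), inv_neg, inv_one])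
      one_pos
  rw [lintegral_eq_lintegral_meas_lt μ hnn (hg.pow_const q).aemeasurable,
    ← Ioc_union_Ioi_eq_Ioi zero_le_one]
  refine (lintegral_union_le _ _ _).trans_lt (ENNReal.add_lt_top.2 ⟨?_, ?_⟩)
  · calc ∫⁻ t in Ioc 0 1, μ {x | t < g x ^ q} ≤ ∫⁻ t in Ioc 0 1, μ univ :=
          lintegral_mono fun t => measure_mono (subset_univ _)
      _ < ∞ := by simp [measure_lt_top]
  · calc _ ≤ ∫⁻ t in Ioi 1, C * ENNReal.ofReal (t ^ q⁻¹) :=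
          setLIntegral_mono' measurableSet_Ioi htail
      _ < ∞ := by
        rw [lintegral_const_mul' _ _ hC]
        exact ENNReal.mul_lt_top hC.lt_top hint.lintegral_lt_top

def sphereCap (i : Fin (m + 1)) (δ : ℝ) : Set (En (m + 1)) := {ω | ‖ω‖ = 1 ∧ δ ≤ ω i}

theorem abs_sub_apply_mul_le_mul_dist_removeNth {ω ω' : En (m + 1)} (hω : ‖ω‖ = 1)
    (hω' : ‖ω'‖ = 1) {i : Fin (m + 1)} {δ : ℝ} (hi : δ ≤ ω i) (hi' : δ ≤ ω' i) :
    |ω i - ω' i| * δ ≤ m * dist (Fin.removeNth i ω.ofLp) (Fin.removeNth i ω'.ofLp) := by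
  set x := Fin.removeNth i ω.ofLp
  set y := Fin.removeNth i ω'.ofLp
  have hd : ∀ j, |y j - x j| ≤ dist x y := fun j => by
    rw [abs_sub_comm, ← Real.dist_eq]
    exact dist_le_pi_dist x y j
  have hsum : ∀ j, |y j + x j| ≤ 2 := fun j => (abs_add_le _ _).trans <|
    (add_le_add (EuclideanSpace.abs_apply_le_one hω' _)
      (EuclideanSpace.abs_apply_le_one hω _)).trans_eq one_add_one_eq_two
  have hfactor : (ω i + ω' i) * (ω i - ω' i) = ∑ j, (y j + x j) * (y j - x j) := by
    have h : ω i ^ 2 + ∑ j, x j ^ 2 = ω' i ^ 2 + ∑ j, y j ^ 2 := by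
      rw [EuclideanSpace.sq_apply_add_sum_sq_removeNth,
        EuclideanSpace.sq_apply_add_sum_sq_removeNth, hω, hω']
    simp_rw [← sq_sub_sq, Finset.sum_sub_distrib]
    linear_combination h
  calc |ω i - ω' i| * δ ≤ |ω i + ω' i| * |ω i - ω' i| / 2 := by
        rw [mul_comm, mul_div_right_comm]; gcongr
        rw [le_div_iff₀ two_pos]; linarith [le_abs_self (ω i + ω' i)]
    _ ≤ (∑ j, |y j + x j| * |y j - x j|) / 2 := by
        rw [← abs_mul, hfactor]; gcongr; simp only [← abs_mul]; exact Finset.abs_sum_le_sum_abs _ _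
    _ ≤ (∑ _j : Fin m, 2 * dist x y) / 2 := by gcongr with j; exacts [hsum j, hd j]
    _ = m * dist x y := by simp; ring

theorem dist_le_mul_dist_removeNth {ω ω' : En (m + 1)} (hω : ‖ω‖ = 1) (hω' : ‖ω'‖ = 1)
    {i : Fin (m + 1)} {δ : ℝ} (hδ : 0 < δ) (hi : δ ≤ ω i) (hi' : δ ≤ ω' i) :
    dist ω ω' ≤ (m + 1) / δ * dist (Fin.removeNth i ω.ofLp) (Fin.removeNth i ω'.ofLp) := by
  have hcap := abs_sub_apply_mul_le_mul_dist_removeNth hω hω' hi hi'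
  set x := Fin.removeNth i ω.ofLp
  set y := Fin.removeNth i ω'.ofLp
  have hδ₁ : δ ≤ 1 := hi.trans ((le_abs_self _).trans (EuclideanSpace.abs_apply_le_one hω i))
  have hrest : ∑ j, (x j - y j) ^ 2 ≤ m * dist x y ^ 2 := calc
    _ ≤ ∑ _j : Fin m, dist x y ^ 2 := Finset.sum_le_sum fun j _ =>
      sq_le_sq.2 ((dist_le_pi_dist x y j).trans (le_abs_self _))
    _ = m * dist x y ^ 2 := by simp
  rw [← pow_le_pow_iff_left₀ dist_nonneg (by positivity) two_ne_zero,
    EuclideanSpace.dist_sq_eq_sq_add_sum_sq_removeNth ω ω' i, mul_pow, div_pow,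
    div_mul_eq_mul_div, le_div_iff₀ (by positivity), ← sq_abs]
  have h1 : (|ω i - ω' i| * δ) ^ 2 ≤ (m * dist x y) ^ 2 := pow_le_pow_left₀ (by positivity) hcap 2
  have h2 : m * dist x y ^ 2 * δ ^ 2 ≤ m * dist x y ^ 2 :=
    mul_le_of_le_one_right (by positivity) (pow_le_one₀ hδ.le hδ₁)
  nlinarith [mul_le_mul_of_nonneg_right hrest (sq_nonneg δ)]

theorem hausdorffMeasure_le_volume_image_removeNth {i : Fin (m + 1)} {δ : ℝ} (hδ : 0 < δ)
    {A : Set (En (m + 1))} (hA : A ⊆ sphereCap i δ) :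
    μH[m] A ≤ ENNReal.ofReal ((m + 1) / δ) ^ (m : ℝ) *
      volume ((Fin.removeNth i ∘ WithLp.ofLp) '' A) := by
  have h := hausdorffMeasure_le_mul_image_of_dist_le (K := ((m + 1) / δ).toNNReal)
    (f := Fin.removeNth i ∘ WithLp.ofLp) (fun x hx y hy => ?_) (Nat.cast_nonneg m) (s := A)
  · have hvol := hausdorffMeasure_pi_real (ι := Fin m)
    rw [Fintype.card_fin] at hvol
    rwa [hvol] at h
  · rw [Real.coe_toNNReal _ (by positivity)]
    exact dist_le_mul_dist_removeNth (hA hx).1 (hA hy).1 hδ (hA hx).2 (hA hy).2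

theorem volume_image_removeNth_sphereCap_inter_le {i k : Fin (m + 1)} {δ t : ℝ} (hδ : 0 < δ)
    (hδ₁ : δ ≤ 1) (ht : 0 ≤ t) :
    volume ((Fin.removeNth i ∘ WithLp.ofLp) '' (sphereCap i δ ∩ {ω | |ω k| ≤ t})) ≤
      2 ^ m * ENNReal.ofReal (t / δ) := by
  rcases eq_or_ne i k with rfl | hik
  · rcases lt_or_ge t δ with htδ | hδt
    · have hempty : sphereCap i δ ∩ {ω | |ω i| ≤ t} = ∅ :=
        eq_empty_iff_forall_notMem.2 fun ω ⟨⟨_, hδω⟩, (hωt : |ω i| ≤ t)⟩ => by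
          linarith [le_abs_self (ω i)]
      simp [hempty]
    · have hcube : (Fin.removeNth i ∘ WithLp.ofLp) '' (sphereCap i δ ∩ {ω | |ω i| ≤ t}) ⊆
          {x : Fin m → ℝ | ∀ j, |x j| ≤ 1} := by
        rintro _ ⟨ω, ⟨⟨hω, -⟩, -⟩, rfl⟩ j
        exact EuclideanSpace.abs_apply_le_one hω _
      calc _ ≤ volume {x : Fin m → ℝ | ∀ j, |x j| ≤ 1} := measure_mono hcube
        _ = 2 ^ m := by rw [volume_cube_eq, Fintype.card_fin]
        _ ≤ 2 ^ m * ENNReal.ofReal (t / δ) := by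
          refine le_mul_of_one_le_right' ?_
          rw [ENNReal.one_le_ofReal, one_le_div hδ]; exact hδt
  · obtain ⟨j₀, rfl⟩ := Fin.exists_succAbove_eq hik.symm
    have hslab : (Fin.removeNth i ∘ WithLp.ofLp) ''
        (sphereCap i δ ∩ {ω | |ω (i.succAbove j₀)| ≤ t}) ⊆
          {x : Fin m → ℝ | ∀ j, |x j| ≤ 1} ∩ {x | |x j₀| ≤ t} := by
      rintro _ ⟨ω, ⟨⟨hω, -⟩, hωk⟩, rfl⟩
      exact ⟨fun j => EuclideanSpace.abs_apply_le_one hω _, hωk⟩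
    calc _ ≤ _ := measure_mono hslab
      _ ≤ 2 ^ m * ENNReal.ofReal t := by
        simpa using volume_cube_inter_slab_le j₀ t
      _ ≤ 2 ^ m * ENNReal.ofReal (t / δ) := by
        gcongr; exact le_div_self ht hδ hδ₁

theorem exists_hausdorffMeasure_sphere_inter_abs_apply_le (k : Fin (m + 1)) :
    ∃ C : ℝ≥0∞, C ≠ ∞ ∧ ∀ t : ℝ, 0 ≤ t →
      μH[m] (sphere (0 : En (m + 1)) 1 ∩ {ω | |ω k| ≤ t}) ≤ C * ENNReal.ofReal t := by
  set δ : ℝ := ((m : ℝ) + 1)⁻¹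
  have hδ : 0 < δ := by positivity
  have hδ₁ : δ ≤ 1 := inv_le_one_of_one_le₀ (by linarith [m.cast_nonneg (α := ℝ)])
  set P : ℝ≥0∞ := ENNReal.ofReal ((m + 1) / δ) ^ (m : ℝ) * (2 ^ m * ENNReal.ofReal δ⁻¹)
  refine ⟨2 * (m + 1) * P, by finiteness, fun t ht => ?_⟩
  set B : Set (En (m + 1)) := {ω | |ω k| ≤ t}
  have hpiece : ∀ i, μH[m] (sphereCap i δ ∩ B) ≤ P * ENNReal.ofReal t := fun i => calc
    _ ≤ _ := hausdorffMeasure_le_volume_image_removeNth hδ inter_subset_left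
    _ ≤ ENNReal.ofReal ((m + 1) / δ) ^ (m : ℝ) * (2 ^ m * ENNReal.ofReal (t / δ)) := by
      gcongr; exact volume_image_removeNth_sphereCap_inter_le hδ hδ₁ ht
    _ = P * ENNReal.ofReal t := by
      rw [div_eq_mul_inv t, ENNReal.ofReal_mul ht]; ring
  -- the caps `ω i ≤ -δ` are the preimages under `ω ↦ -ω`, which preserves `B` and `μH[m]`
  have hcover : sphere (0 : En (m + 1)) 1 ∩ B ⊆
      ⋃ i, (sphereCap i δ ∩ B ∪ Neg.neg ⁻¹' (sphereCap i δ ∩ B)) := by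
    rintro ω ⟨hω, hωB⟩
    rw [mem_sphere_zero_iff_norm] at hω
    obtain ⟨i, hi⟩ := EuclideanSpace.exists_inv_le_abs_apply hω
    refine mem_iUnion.2 ⟨i, ?_⟩
    rcases le_total 0 (ω i) with hpos | hneg
    · exact Or.inl ⟨⟨hω, by rwa [abs_of_nonneg hpos] at hi⟩, hωB⟩
    · refine Or.inr ⟨⟨by rwa [norm_neg], ?_⟩, by simpa [B] using hωB⟩
      rw [abs_of_nonpos hneg] at hi
      simpa using hi
  calc μH[m] (sphere (0 : En (m + 1)) 1 ∩ B)
      ≤ ∑ i, μH[m] (sphereCap i δ ∩ B ∪ Neg.neg ⁻¹' (sphereCap i δ ∩ B)) :=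
        (measure_mono hcover).trans (measure_iUnion_fintype_le _ _)
    _ ≤ ∑ _i : Fin (m + 1), 2 * (P * ENNReal.ofReal t) := by
      gcongr with i
      refine (measure_union_le _ _).trans ?_
      have hneg : μH[m] (Neg.neg ⁻¹' (sphereCap i δ ∩ B)) = μH[m] (sphereCap i δ ∩ B) :=
        (IsometryEquiv.neg (En (m + 1))).hausdorffMeasure_preimage _ _
      rw [hneg, two_mul]
      exact add_le_add (hpiece i) (hpiece i)
    _ = 2 * (m + 1) * P * ENNReal.ofReal t := by
      simp; ring

theorem hausdorffMeasure_sphere_lt_top : μH[m] (sphere (0 : En (m + 1)) 1) < ∞ := by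
  obtain ⟨C, hC, hband⟩ := exists_hausdorffMeasure_sphere_inter_abs_apply_le (m := m) 0
  have hsub : sphere (0 : En (m + 1)) 1 ⊆ sphere 0 1 ∩ {ω | |ω 0| ≤ 1} := fun ω hω =>
    ⟨hω, EuclideanSpace.abs_apply_le_one (mem_sphere_zero_iff_norm.1 hω) 0⟩
  calc _ ≤ _ := measure_mono hsub
    _ ≤ C * ENNReal.ofReal 1 := hband 1 zero_le_one
    _ < ∞ := by simpa using hC.lt_top

theorem hausdorffMeasure_sphere_inter_apply_eq_zero (k : Fin (m + 1)) :
    μH[m] (sphere (0 : En (m + 1)) 1 ∩ {ω | ω k = 0}) = 0 := by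
  obtain ⟨C, -, hband⟩ := exists_hausdorffMeasure_sphere_inter_abs_apply_le k
  refine nonpos_iff_eq_zero.1 ?_
  have hsub : {ω : En (m + 1) | ω k = 0} ⊆ {ω | |ω k| ≤ 0} := fun ω (hω : ω k = 0) => by
    simp [mem_ofPred_eq, hω]
  calc _ ≤ _ := measure_mono (inter_subset_inter_right _ hsub)
    _ ≤ C * ENNReal.ofReal 0 := hband 0 le_rfl
    _ = 0 := by simp

theorem integrableOn_sphere_abs_apply_rpow (k : Fin (m + 1)) {q : ℝ} (hq : -1 < q) (hq₀ : q < 0) :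
    IntegrableOn (fun ω : En (m + 1) => |ω k| ^ q) (sphere 0 1) μH[m] := by
  obtain ⟨C, hC, hband⟩ := exists_hausdorffMeasure_sphere_inter_abs_apply_le k
  have : IsFiniteMeasure (μH[m].restrict (sphere (0 : En (m + 1)) 1)) :=
    isFiniteMeasure_restrict.2 hausdorffMeasure_sphere_lt_top.ne
  have hmeas : Measurable fun ω : En (m + 1) => |ω k| := by fun_prop
  refine integrable_rpow_of_measure_le_mul hmeas (fun ω => abs_nonneg _) hC (fun t ht => ?_) hq hq₀
  rw [Measure.restrict_apply (measurableSet_le hmeas measurable_const), inter_comm]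
  exact hband t ht

theorem exists_setIntegral_sphere_abs_apply_add_rpow_le (k : Fin (m + 1)) {q : ℝ} (hq : -1 < q) :
    ∃ c : ℝ, ∀ a : ℝ, 0 ≤ a →
      ∫ ω in sphere (0 : En (m + 1)) 1, (|ω k| + a) ^ q ∂μH[m] ≤ c * (1 + a) ^ q := by
  rcases le_or_gt 0 q with hq₀ | hq₀
  · refine ⟨μH[m].real (sphere (0 : En (m + 1)) 1), fun a ha => ?_⟩
    rw [mul_comm]
    refine (Real.le_norm_self _).trans
      (norm_setIntegral_le_of_norm_le_const hausdorffMeasure_sphere_lt_top fun ω hω => ?_)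
    have hω₁ := EuclideanSpace.abs_apply_le_one (mem_sphere_zero_iff_norm.1 hω) k
    rw [Real.norm_eq_abs, abs_of_nonneg (by positivity)]
    exact Real.rpow_le_rpow (by positivity) (by linarith) hq₀
  · refine ⟨2 ^ (-q) * ∫ ω in sphere (0 : En (m + 1)) 1, |ω k| ^ q ∂μH[m], fun a ha => ?_⟩
    have hae : ∀ᵐ ω ∂μH[m].restrict (sphere (0 : En (m + 1)) 1), 0 < |ω k| ∧ |ω k| ≤ 1 := by
      have hne : ∀ᵐ ω ∂μH[m].restrict (sphere (0 : En (m + 1)) 1), ω k ≠ 0 := by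
        rw [ae_iff, Measure.restrict_apply' isClosed_sphere.measurableSet]
        simpa [inter_comm] using hausdorffMeasure_sphere_inter_apply_eq_zero k
      filter_upwards [hne, ae_restrict_mem isClosed_sphere.measurableSet] with ω hω₀ hω
      exact ⟨abs_pos.2 hω₀, EuclideanSpace.abs_apply_le_one (mem_sphere_zero_iff_norm.1 hω) k⟩
    calc ∫ ω in sphere (0 : En (m + 1)) 1, (|ω k| + a) ^ q ∂μH[m]
        ≤ ∫ ω in sphere (0 : En (m + 1)) 1, ((1 + a) / 2) ^ q * |ω k| ^ q ∂μH[m] :=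
          integral_mono_of_nonneg (ae_of_all _ fun ω => by positivity)
            ((integrableOn_sphere_abs_apply_rpow k hq hq₀).const_mul _)
            (hae.mono fun ω hω => Real.rpow_add_le_div_two_rpow_mul hq₀ hω.1 hω.2 ha)
      _ = 2 ^ (-q) * (∫ ω in sphere (0 : En (m + 1)) 1, |ω k| ^ q ∂μH[m]) * (1 + a) ^ q := by
          rw [integral_const_mul, Real.div_rpow (by positivity) zero_le_two,
            Real.rpow_neg zero_le_two]
          ring

theorem setIntegral_sphere_inner_eq {n : ℕ} (d r : ℝ) {e : En n} (he : ‖e‖ = 1) (i : Fin n)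
    (F : ℝ → ℝ) :
    ∫ ω in sphere (0 : En n) r, F (inner ℝ e ω) ∂μH[d] =
      ∫ ω in sphere (0 : En n) r, F (ω i) ∂μH[d] := by
  obtain ⟨L, hL⟩ := EuclideanSpace.exists_linearIsometryEquiv_inner_eq_apply he i
  have hpre : L.toIsometryEquiv ⁻¹' sphere 0 r = sphere 0 r := by ext ω; simp
  have h := (L.toIsometryEquiv.measurePreserving_hausdorffMeasure d).setIntegral_preimage_emb
    L.toHomeomorph.measurableEmbedding (fun ω => F (ω i)) (sphere 0 r)
  rw [hpre] at h
  simpa [hL] using h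

end

namespace FracP

theorem stmt7 (n : ℕ) (hn : 1 ≤ n) (p : ℝ) (hp : 1 < p) :
    ∃ c : ℝ, ∀ e : En n, ‖e‖ = 1 → ∀ a : ℝ, 0 ≤ a →
      ∫ ω in Metric.sphere (0 : En n) 1, (|(inner ℝ e ω : ℝ)| + a) ^ (p - 2)
          ∂(μH[(n : ℝ) - 1]) ≤ c * (1 + a) ^ (p - 2) := by
  obtain ⟨m, rfl⟩ : ∃ m, n = m + 1 := ⟨n - 1, by omega⟩
  obtain ⟨c, hc⟩ := exists_setIntegral_sphere_abs_apply_add_rpow_le (m := m) 0 (q := p - 2)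
    (by linarith)
  refine ⟨c, fun e he a ha => ?_⟩
  rw [Nat.cast_succ, add_sub_cancel_right,
    setIntegral_sphere_inner_eq _ _ he 0 fun s => (|s| + a) ^ (p - 2)]
  exact hc a ha

end FracP
end
end

section
/- Let p > 1 and let u : ℝⁿ → [−∞,∞] be a measurable function with u_− ∈ L^{p−1}_loc(ℝⁿ). Let {x_k} be a sequence in ℝⁿ converging to x ∈ ℝⁿ. Then there exists a subsequence {x_{k_j}} such that liminf_{j→∞} u(x_{k_j} + z) ≥ u(x + z) for almost every z ∈ ℝⁿ. -/
open MeasureTheory Filter Set Metric Topology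
open scoped ENNReal NNReal

noncomputable section

/-!
Translation is continuous on `L¹`, so the translates `g(x_k + ·)` of an integrable `g` converge in
`L¹`, hence in measure, to `g(x + ·)`, and a subsequence converges almost everywhere. Apply this to
`g = arctan ∘ u` times the integrable weight `(1 + |z|)^{-(n+1)}`: since `arctan` is bounded and a
strictly monotone map `[-∞, ∞] → ℝ`, a.e. convergence of `arctan u(x_{k_j} + z)` to
`arctan u(x + z)` forces `u(x + z) ≤ liminf u(x_{k_j} + z)`.
-/

open Real

namespace FracP

theorem exists_strictMono_ae_tendsto_comp_add {G E : Type*} [AddGroup G] [TopologicalSpace G]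
    [IsTopologicalAddGroup G] [MeasurableSpace G] [BorelSpace G] [NormedAddCommGroup E]
    {μ : Measure G} [IsLocallyFiniteMeasure μ] [μ.InnerRegularCompactLTTop]
    [μ.IsAddLeftInvariant] {f : G → E} (hf : Integrable f μ) {xk : ℕ → G} {x : G}
    (hx : Tendsto xk atTop (𝓝 x)) :
    ∃ ns : ℕ → ℕ, StrictMono ns ∧
      ∀ᵐ z ∂μ, Tendsto (fun j => f (xk (ns j) + z)) atTop (𝓝 (f (x + z))) := by
  have : Fact ((1 : ENNReal) ≠ ⊤) := ⟨ENNReal.one_ne_top⟩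
  set F : Lp E 1 μ := hf.toL1 f
  have hL1 : Tendsto (fun k => DomAddAct.mk (xk k) +ᵥ F) atTop (𝓝 (DomAddAct.mk x +ᵥ F)) :=
    ((DomAddAct.continuous_mk.tendsto x).comp hx).vadd_const F
  obtain ⟨ns, hns, hae⟩ := (tendstoInMeasure_of_tendsto_Lp hL1).exists_seq_tendsto_ae
  refine ⟨ns, hns, ?_⟩
  have htranslate : ∀ a : G, ⇑(DomAddAct.mk a +ᵥ F) =ᵐ[μ] fun z => f (a + z) := fun a =>
    (DomAddAct.vadd_Lp_ae_eq _ F).trans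
      ((measurePreserving_add_left μ a).quasiMeasurePreserving.ae_eq_comp hf.coeFn_toL1)
  filter_upwards [hae, ae_all_iff.2 fun j => htranslate (xk (ns j)), htranslate x]
    with z hz hk h0
  simpa only [hk, h0] using hz

theorem exists_strictMono_ae_tendsto_comp_add_of_bounded {E : Type*} [NormedAddCommGroup E]
    [NormedSpace ℝ E] [FiniteDimensional ℝ E] [MeasurableSpace E] [BorelSpace E]
    {μ : Measure E} [μ.IsAddHaarMeasure] {f : E → ℝ} {C : ℝ} (hf : AEStronglyMeasurable f μ)
    (hC : ∀ᵐ z ∂μ, ‖f z‖ ≤ C) {xk : ℕ → E} {x : E} (hx : Tendsto xk atTop (𝓝 x)) :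
    ∃ ns : ℕ → ℕ, StrictMono ns ∧
      ∀ᵐ z ∂μ, Tendsto (fun j => f (xk (ns j) + z)) atTop (𝓝 (f (x + z))) := by
  set w : E → ℝ := fun z => (1 + ‖z‖) ^ (-(Module.finrank ℝ E + 1 : ℝ))
  have hw_pos : ∀ z, 0 < w z := fun z => rpow_pos_of_pos (by positivity) _
  have hw_cont : Continuous w :=
    (continuous_const.add continuous_norm).rpow_const fun z =>
      Or.inl (by positivity : 1 + ‖z‖ ≠ 0)
  have hfw : Integrable (fun z => f z * w z) μ :=
    (integrable_one_add_norm (by linarith)).bdd_mul hf hC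
  obtain ⟨ns, hns, hae⟩ := exists_strictMono_ae_tendsto_comp_add hfw hx
  refine ⟨ns, hns, hae.mono fun z hz => ?_⟩
  have hwz : Tendsto (fun j => w (xk (ns j) + z)) atTop (𝓝 (w (x + z))) :=
    (hw_cont.tendsto _).comp ((hx.comp hns.tendsto_atTop).add_const z)
  have hquot := hz.div hwz (hw_pos _).ne'
  rw [mul_div_cancel_right₀ _ (hw_pos _).ne'] at hquot
  exact hquot.congr fun j => mul_div_cancel_right₀ _ (hw_pos _).ne'

theorem _root_.StrictMono.le_liminf_of_tendsto {α β ι : Type*}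
    [ConditionallyCompleteLinearOrder α] [LinearOrder β] [TopologicalSpace β] [OrderTopology β]
    {φ : α → β} (hφ : StrictMono φ)
    {l : Filter ι} {a : ι → α} {b : α} (h : Tendsto (fun i => φ (a i)) l (𝓝 (φ b)))
    (hbdd : l.IsBoundedUnder (· ≥ ·) a := by isBoundedDefault)
    (hcobdd : l.IsCoboundedUnder (· ≥ ·) a := by isBoundedDefault) :
    b ≤ liminf a l :=
  (le_liminf_iff hcobdd hbdd).2 fun _ hc =>
    (h.eventually (eventually_gt_nhds (hφ hc))).mono fun _ => hφ.lt_iff_lt.1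

def arctanEReal (e : EReal) : ℝ :=
  if e = ⊥ then -(π / 2) else if e = ⊤ then π / 2 else arctan e.toReal

theorem arctanEReal_coe (t : ℝ) : arctanEReal t = arctan t := by
  simp [arctanEReal]

theorem abs_arctanEReal_le (e : EReal) : |arctanEReal e| ≤ π / 2 := by
  induction e using EReal.rec with
  | bot => simp [arctanEReal, abs_of_pos pi_div_two_pos]
  | coe t =>
      rw [arctanEReal_coe, abs_le]
      exact ⟨(neg_pi_div_two_lt_arctan t).le, (arctan_lt_pi_div_two t).le⟩
  | top => simp [arctanEReal, abs_of_pos pi_div_two_pos]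

theorem strictMono_arctanEReal : StrictMono arctanEReal := by
  intro a b hab
  induction a using EReal.rec with
  | bot =>
      induction b using EReal.rec with
      | bot => exact absurd hab (lt_irrefl _)
      | coe t => simpa [arctanEReal_coe, arctanEReal] using neg_pi_div_two_lt_arctan t
      | top => simp [arctanEReal, pi_pos]
  | coe s =>
      induction b using EReal.rec with
      | bot => exact absurd hab not_lt_bot
      | coe t =>
          rw [arctanEReal_coe, arctanEReal_coe]
          exact arctan_strictMono (EReal.coe_lt_coe_iff.mp hab)
      | top => simpa [arctanEReal_coe, arctanEReal] using arctan_lt_pi_div_two s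
  | top => exact absurd hab not_top_lt

theorem measurable_arctanEReal : Measurable arctanEReal :=
  (measurable_const.ite (MeasurableSet.singleton ⊥)) <|
    (measurable_const.ite (MeasurableSet.singleton ⊤))
      (continuous_arctan.measurable.comp measurable_ereal_toReal)

theorem stmt14_general (n : ℕ)
    (u : En n → EReal) (humeas : Measurable u)
    (x : En n) (xk : ℕ → En n) (hconv : Tendsto xk atTop (𝓝 x)) :
    ∃ k : ℕ → ℕ, StrictMono k ∧
      ∀ᵐ z : En n, u (x + z) ≤ Filter.liminf (fun j => u (xk (k j) + z)) atTop := by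
  obtain ⟨k, hk, hae⟩ := exists_strictMono_ae_tendsto_comp_add_of_bounded
    (measurable_arctanEReal.comp humeas).aestronglyMeasurable
    (ae_of_all volume fun z => abs_arctanEReal_le (u z)) hconv
  exact ⟨k, hk, hae.mono fun z hz => strictMono_arctanEReal.le_liminf_of_tendsto hz⟩

theorem stmt14 (n : ℕ) (hn : 1 ≤ n) (p : ℝ) (hp : 1 < p)
    (u : En n → EReal) (humeas : Measurable u)
    (huloc : ∀ C : Set (En n), IsCompact C → ∫⁻ z in C, (negE n u z) ^ (p - 1) < ⊤)
    (x : En n) (xk : ℕ → En n) (hconv : Tendsto xk atTop (𝓝 x)) :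
    ∃ k : ℕ → ℕ, StrictMono k ∧
      ∀ᵐ z : En n, u (x + z) ≤ Filter.liminf (fun j => u (xk (k j) + z)) atTop :=
  stmt14_general n u humeas x xk hconv

end FracP
end
end
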